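/- Let B, C ∈ B(H) be self-adjoint operators with ‖B + C‖ = ‖B‖ + ‖C‖. Then ‖B² + C²‖ = ‖B‖² + ‖C‖² and w(|B||C|) = ‖BC‖ = ‖B‖·‖C‖ = w(BC). -/

import Mathlib

/-!
Since `B + C` is self-adjoint, its norm is the limit of `|re ⟪(B + C) xₙ, xₙ⟫|` along unit
vectors `xₙ`, and after passing to a subsequence `re ⟪(B + C) xₙ, xₙ⟫ → σ (‖B‖ + ‖C‖)` with
`σ = ±1`. As `|re ⟪B x, x⟫| ≤ ‖B‖` and `|re ⟪C x, x⟫| ≤ ‖C‖`, this forces `re ⟪B xₙ, xₙ⟫ → σ ‖B‖`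
and `re ⟪C xₙ, xₙ⟫ → σ ‖C‖` with the same sign. Then
`‖B xₙ - σ ‖B‖ xₙ‖² ≤ 2 ‖B‖² - 2 σ ‖B‖ re ⟪B xₙ, xₙ⟫ → 0`, so the `xₙ` are approximate
eigenvectors of `B`, `C`, `|B|`, `|C|` for `σ ‖B‖`, `σ ‖C‖`, `‖B‖`, `‖C‖` (for `|B|` because
`|re ⟪B x, x⟫| ≤ re ⟪|B| x, x⟫ ≤ ‖B‖`). Consequently they are approximate eigenvectors of
`B² + C²`, `B C` and `|B| |C|` for `‖B‖² + ‖C‖²`, `‖B‖ ‖C‖` and `‖B‖ ‖C‖`, which bounds the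
numerical radii, hence the norms, from below; the upper bounds are the triangle inequality and
submultiplicativity of the norm.
-/

open ContinuousLinearMap

variable {H : Type*} [NormedAddCommGroup H] [InnerProductSpace ℂ H] [CompleteSpace H]

/-- The numerical radius of a bounded linear operator:
`w(T) = sup { |⟨Tx, x⟩| : ‖x‖ = 1 }`. -/
noncomputable def numRadius {E : Type*} [NormedAddCommGroup E] [InnerProductSpace ℂ E]
    (T : E →L[ℂ] E) : ℝ :=
  sSup {r : ℝ | ∃ x : E, ‖x‖ = 1 ∧ r = ‖(inner ℂ (T x) x : ℂ)‖}

/-- The absolute value `|T| = (T*T)^(1/2)` of a bounded linear operator.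
Note `opAbs (adjoint T) = (T T*)^(1/2) = |T*|`. -/
noncomputable def opAbs (T : H →L[ℂ] H) : H →L[ℂ] H := CFC.sqrt (adjoint T * T)

/-- The off-diagonal operator matrix `[[0, B], [C, 0]]` acting on `H ⊕ H`
(with the Hilbert space structure `WithLp 2 (H × H)`) by `(x₁, x₂) ↦ (B x₂, C x₁)`. -/
noncomputable def offDiag (B C : H →L[ℂ] H) :
    WithLp 2 (H × H) →L[ℂ] WithLp 2 (H × H) :=
  ((WithLp.prodContinuousLinearEquiv 2 ℂ H H).symm : (H × H) →L[ℂ] WithLp 2 (H × H)).comp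
    (((B.comp (ContinuousLinearMap.snd ℂ H H)).prod
        (C.comp (ContinuousLinearMap.fst ℂ H H))).comp
      ((WithLp.prodContinuousLinearEquiv 2 ℂ H H) : WithLp 2 (H × H) →L[ℂ] H × H))

open Filter Topology
open scoped InnerProductSpace ComplexConjugate

section InnerProductSpace

variable {𝕜 E ι : Type*} [RCLike 𝕜] [NormedAddCommGroup E] [InnerProductSpace 𝕜 E]
  {l : Filter ι}

lemma abs_re_inner_le_opNorm (T : E →L[𝕜] E) {x : E} (hx : ‖x‖ = 1) :
    |RCLike.re ⟪T x, x⟫_𝕜| ≤ ‖T‖ := by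
  simpa [rayleighQuotient, reApplyInnerSelf_apply, hx] using T.rayleighQuotient_le_norm x

lemma exists_norm_eq_one_lt_abs_re_inner [Nontrivial E] {A : E →L[𝕜] E}
    (hA : (A : E →ₗ[𝕜] E).IsSymmetric) {r : ℝ} (hr : r < ‖A‖) :
    ∃ x : E, ‖x‖ = 1 ∧ r < |RCLike.re ⟪A x, x⟫_𝕜| := by
  rw [A.norm_eq_iSup_rayleighQuotient hA] at hr
  obtain ⟨y, hy⟩ := exists_lt_of_lt_ciSup hr
  obtain ⟨z, hz, hyz⟩ : ∃ z : E, z ≠ 0 ∧ |A.rayleighQuotient y| ≤ |A.rayleighQuotient z| := by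
    rcases eq_or_ne y 0 with rfl | hy0
    · obtain ⟨z, hz⟩ := exists_ne (0 : E)
      exact ⟨z, hz, by simp⟩
    · exact ⟨y, hy0, le_rfl⟩
  have hnorm : ‖(‖z‖⁻¹ : 𝕜) • z‖ = 1 := norm_smul_inv_norm hz
  refine ⟨(‖z‖⁻¹ : 𝕜) • z, hnorm, hy.trans_le (hyz.trans_eq ?_)⟩
  rw [← A.rayleigh_smul z (c := (‖z‖⁻¹ : 𝕜)) (by simpa using hz), rayleighQuotient,
    reApplyInnerSelf_apply, hnorm]
  simp

lemma exists_seq_norm_eq_one_tendsto_re_inner [Nontrivial E] {A : E →L[𝕜] E}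
    (hA : (A : E →ₗ[𝕜] E).IsSymmetric) :
    ∃ σ : ℝ, |σ| = 1 ∧ ∃ x : ℕ → E, (∀ n, ‖x n‖ = 1) ∧
      Tendsto (fun n => RCLike.re ⟪A (x n), x n⟫_𝕜) atTop (𝓝 (σ * ‖A‖)) := by
  have hr (n : ℕ) : ‖A‖ - 1 / (n + 1) < ‖A‖ := sub_lt_self _ Nat.one_div_pos_of_nat
  choose x hx hlt using fun n => exists_norm_eq_one_lt_abs_re_inner hA (hr n)
  set t := fun n => RCLike.re ⟪A (x n), x n⟫_𝕜
  have ht (n : ℕ) : |t n| ≤ ‖A‖ := abs_re_inner_le_opNorm A (hx n)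
  have habs : Tendsto (fun n => |t n|) atTop (𝓝 ‖A‖) := by
    refine tendsto_of_tendsto_of_tendsto_of_le_of_le ?_ tendsto_const_nhds
      (fun n => (hlt n).le) ht
    simpa using tendsto_const_nhds.sub (tendsto_one_div_add_atTop_nhds_zero_nat (𝕜 := ℝ))
  obtain ⟨L, -, φ, hφ, hL⟩ := (isCompact_closedBall (0 : ℝ) ‖A‖).tendsto_subseq
    (x := t) fun n => by simpa using ht n
  have hLA : |L| = ‖A‖ := tendsto_nhds_unique hL.abs (habs.comp hφ.tendsto_atTop)
  rcases (abs_eq (norm_nonneg A)).mp hLA with rfl | rfl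
  · exact ⟨1, by simp, x ∘ φ, fun n => hx _, by simpa [t, Function.comp_def] using hL⟩
  · exact ⟨-1, by simp, x ∘ φ, fun n => hx _, by simpa [t, Function.comp_def] using hL⟩

lemma tendsto_sub_smul_of_tendsto_re_inner {x y : ι → E} {a : ℝ} (hx : ∀ i, ‖x i‖ = 1)
    (hy : ∀ i, ‖y i‖ ≤ |a|) (h : Tendsto (fun i => RCLike.re ⟪y i, x i⟫_𝕜) l (𝓝 a)) :
    Tendsto (fun i => y i - (a : 𝕜) • x i) l (𝓝 0) := by
  have hsq (i : ι) : ‖y i - (a : 𝕜) • x i‖ ^ 2 ≤ 2 * a ^ 2 - 2 * a * RCLike.re ⟪y i, x i⟫_𝕜 := by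
    have hyi : ‖y i‖ ^ 2 ≤ a ^ 2 := by
      simpa only [sq_abs] using pow_le_pow_left₀ (norm_nonneg _) (hy i) 2
    rw [norm_sub_sq (𝕜 := 𝕜), inner_smul_right, RCLike.re_ofReal_mul, norm_smul,
      RCLike.norm_ofReal, hx, mul_one, sq_abs]
    linarith
  have hlim : Tendsto (fun i => 2 * a ^ 2 - 2 * a * RCLike.re ⟪y i, x i⟫_𝕜) l (𝓝 0) := by
    have := (tendsto_const_nhds (x := 2 * a ^ 2)).sub (h.const_mul (2 * a))
    rwa [show 2 * a ^ 2 - 2 * a * a = 0 by ring] at this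
  have hsq0 := squeeze_zero (fun i => sq_nonneg _) hsq hlim
  rw [tendsto_zero_iff_norm_tendsto_zero]
  simpa [Real.sqrt_sq (norm_nonneg _)] using hsq0.sqrt

def IsApproxEigenseq (T : E →L[𝕜] E) (a : 𝕜) (l : Filter ι) (x : ι → E) : Prop :=
  Tendsto (fun i => T (x i) - a • x i) l (𝓝 0)

namespace IsApproxEigenseq

variable {T S : E →L[𝕜] E} {a b : 𝕜} {x : ι → E}

lemma of_tendsto_re_inner {a : ℝ} (hx : ∀ i, ‖x i‖ = 1) (hT : ‖T‖ ≤ |a|)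
    (h : Tendsto (fun i => RCLike.re ⟪T (x i), x i⟫_𝕜) l (𝓝 a)) :
    IsApproxEigenseq T (a : 𝕜) l x :=
  tendsto_sub_smul_of_tendsto_re_inner hx
    (fun i => (T.le_opNorm (x i)).trans (by rw [hx, mul_one]; exact hT)) h

lemma add (hT : IsApproxEigenseq T a l x) (hS : IsApproxEigenseq S b l x) :
    IsApproxEigenseq (T + S) (a + b) l x := by
  simpa only [IsApproxEigenseq, add_zero, add_apply, add_smul, add_sub_add_comm]
    using Tendsto.add hT hS

lemma mul (hT : IsApproxEigenseq T a l x) (hS : IsApproxEigenseq S b l x) :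
    IsApproxEigenseq (T * S) (a * b) l x := by
  have h := ((T.continuous.tendsto 0).comp hS).add (hT.const_smul b)
  rw [map_zero, smul_zero, add_zero] at h
  refine h.congr fun i => ?_
  simp only [Function.comp_apply, mul_apply_eq_comp, map_sub, map_smul, smul_sub,
    mul_smul, smul_comm b a]
  abel

lemma tendsto_inner (hx : ∀ i, ‖x i‖ = 1) (hT : IsApproxEigenseq T a l x) :
    Tendsto (fun i => ⟪T (x i), x i⟫_𝕜) l (𝓝 (conj a)) := by
  rw [tendsto_iff_norm_sub_tendsto_zero]
  refine squeeze_zero (fun i => norm_nonneg _) (fun i => ?_) (by simpa using hT.norm)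
  have : ⟪T (x i), x i⟫_𝕜 - conj a = ⟪T (x i) - a • x i, x i⟫_𝕜 := by
    rw [inner_sub_left, inner_smul_left, inner_self_eq_norm_sq_to_K, hx, RCLike.ofReal_one,
      one_pow, mul_one]
  rw [this]
  simpa [hx] using norm_inner_le_norm (𝕜 := 𝕜) (T (x i) - a • x i) (x i)

end IsApproxEigenseq

end InnerProductSpace

lemma tendsto_of_tendsto_add_of_abs_le {ι : Type*} {l : Filter ι} {u v : ι → ℝ} {σ b c : ℝ}
    (hσ : |σ| = 1) (hu : ∀ i, |u i| ≤ b) (hv : ∀ i, |v i| ≤ c)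
    (h : Tendsto (fun i => u i + v i) l (𝓝 (σ * (b + c)))) :
    Tendsto u l (𝓝 (σ * b)) := by
  have hσ2 : σ * σ = 1 := by rw [← abs_mul_abs_self, hσ, one_mul]
  have hσle (w : ℝ) {d : ℝ} (hw : |w| ≤ d) : σ * w ≤ d :=
    (le_abs_self _).trans (by rw [abs_mul, hσ, one_mul]; exact hw)
  have hlow : Tendsto (fun i => σ * (u i + v i) - c) l (𝓝 b) := by
    convert (h.const_mul σ).sub_const c using 2
    linear_combination -(b + c) * hσ2
  have hσu : Tendsto (fun i => σ * u i) l (𝓝 b) :=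
    tendsto_of_tendsto_of_tendsto_of_le_of_le hlow tendsto_const_nhds
      (fun i => by linarith [hσle _ (hv i)]) (fun i => hσle _ (hu i))
  convert hσu.const_mul σ using 1
  ext i
  linear_combination -(u i) * hσ2

section NumRadius

variable {E ι : Type*} [NormedAddCommGroup E] [InnerProductSpace ℂ E] {l : Filter ι}

lemma norm_inner_le_opNorm (T : E →L[ℂ] E) {x : E} (hx : ‖x‖ = 1) : ‖⟪T x, x⟫_ℂ‖ ≤ ‖T‖ :=
  (norm_inner_le_norm _ _).trans (by simpa [hx] using T.le_opNorm x)

lemma numRadius_nonneg (T : E →L[ℂ] E) : 0 ≤ numRadius T :=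
  Real.sSup_nonneg (by rintro _ ⟨x, -, rfl⟩; exact norm_nonneg _)

lemma numRadius_le_opNorm (T : E →L[ℂ] E) : numRadius T ≤ ‖T‖ :=
  Real.sSup_le (by rintro _ ⟨x, hx, rfl⟩; exact norm_inner_le_opNorm T hx) (norm_nonneg T)

lemma norm_inner_le_numRadius (T : E →L[ℂ] E) {x : E} (hx : ‖x‖ = 1) :
    ‖⟪T x, x⟫_ℂ‖ ≤ numRadius T :=
  le_csSup ⟨‖T‖, by rintro _ ⟨y, hy, rfl⟩; exact norm_inner_le_opNorm T hy⟩ ⟨x, hx, rfl⟩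

lemma IsApproxEigenseq.norm_le_numRadius [l.NeBot] {T : E →L[ℂ] E} {a : ℂ} {x : ι → E}
    (hx : ∀ i, ‖x i‖ = 1) (hT : IsApproxEigenseq T a l x) : ‖a‖ ≤ numRadius T :=
  le_of_tendsto (by simpa using (hT.tendsto_inner hx).norm)
    (Eventually.of_forall fun i => norm_inner_le_numRadius T (hx i))

end NumRadius

lemma opAbs_eq_cfcAbs (T : H →L[ℂ] H) : opAbs T = CFC.abs T := by
  rw [opAbs, CFC.abs, star_eq_adjoint]

lemma abs_re_inner_le_re_inner_cfcAbs {B : H →L[ℂ] H} (hB : IsSelfAdjoint B) (x : H) :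
    |RCLike.re ⟪B x, x⟫_ℂ| ≤ RCLike.re ⟪CFC.abs B x, x⟫_ℂ := by
  have re_inner_le {X Y : H →L[ℂ] H} (hXY : X ≤ Y) :
      RCLike.re ⟪X x, x⟫_ℂ ≤ RCLike.re ⟪Y x, x⟫_ℂ := by
    simpa [inner_sub_left] using ((le_def X Y).mp hXY).re_inner_nonneg_left x
  have hle : B ≤ CFC.abs B := sub_nonneg.mp <| by
    rw [CFC.abs_sub_self B hB]
    exact smul_nonneg zero_le_two (CFC.negPart_nonneg B)
  have hge : -B ≤ CFC.abs B := sub_nonneg.mp <| by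
    rw [sub_neg_eq_add, CFC.abs_add_self B hB]
    exact smul_nonneg zero_le_two (CFC.posPart_nonneg B)
  have hneg := re_inner_le hge
  rw [neg_apply, inner_neg_left, map_neg] at hneg
  exact abs_le.mpr ⟨by linarith, re_inner_le hle⟩

lemma IsApproxEigenseq.cfcAbs {ι : Type*} {l : Filter ι} {B : H →L[ℂ] H} {x : ι → H} {a : ℝ}
    (hB : IsSelfAdjoint B) (hx : ∀ i, ‖x i‖ = 1) (ha : |a| = ‖B‖)
    (h : IsApproxEigenseq B (a : ℂ) l x) : IsApproxEigenseq (CFC.abs B) ((|a| : ℝ) : ℂ) l x := by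
  have hnorm : ‖CFC.abs B‖ = |a| := by rw [CFC.norm_abs, ha]
  refine .of_tendsto_re_inner (a := |a|) hx (by rw [hnorm, abs_abs]) ?_
  have hre : Tendsto (fun i => |RCLike.re ⟪B (x i), x i⟫_ℂ|) l (𝓝 |a|) := by
    simpa using ((RCLike.continuous_re.tendsto _).comp (h.tendsto_inner hx)).abs
  refine tendsto_of_tendsto_of_tendsto_of_le_of_le hre tendsto_const_nhds
    (fun i => abs_re_inner_le_re_inner_cfcAbs hB (x i)) (fun i => ?_)
  exact (le_abs_self _).trans (hnorm ▸ abs_re_inner_le_opNorm _ (hx i))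

theorem le_numRadius_of_norm_add_eq {B C : H →L[ℂ] H} (hB : IsSelfAdjoint B)
    (hC : IsSelfAdjoint C) (h : ‖B + C‖ = ‖B‖ + ‖C‖) :
    ‖B‖ ^ 2 + ‖C‖ ^ 2 ≤ numRadius (B ^ 2 + C ^ 2) ∧ ‖B‖ * ‖C‖ ≤ numRadius (B * C) ∧
      ‖B‖ * ‖C‖ ≤ numRadius (CFC.abs B * CFC.abs C) := by
  rcases subsingleton_or_nontrivial H with _ | _
  · simp only [Subsingleton.elim B 0, Subsingleton.elim C 0, norm_zero]
    refine ⟨?_, ?_, ?_⟩ <;> simpa using numRadius_nonneg _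
  obtain ⟨σ, hσ, x, hx, hlim⟩ := exists_seq_norm_eq_one_tendsto_re_inner (hB.add hC).isSymmetric
  simp only [h, add_apply, inner_add_left, map_add] at hlim
  have hBx := tendsto_of_tendsto_add_of_abs_le hσ (fun n => abs_re_inner_le_opNorm B (hx n))
    (fun n => abs_re_inner_le_opNorm C (hx n)) hlim
  have hCx := tendsto_of_tendsto_add_of_abs_le hσ (fun n => abs_re_inner_le_opNorm C (hx n))
    (fun n => abs_re_inner_le_opNorm B (hx n)) (by simpa only [add_comm] using hlim)
  have hσB : |σ * ‖B‖| = ‖B‖ := by rw [abs_mul, hσ, one_mul, abs_norm]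
  have hσC : |σ * ‖C‖| = ‖C‖ := by rw [abs_mul, hσ, one_mul, abs_norm]
  have eB := IsApproxEigenseq.of_tendsto_re_inner hx hσB.ge hBx
  have eC := IsApproxEigenseq.of_tendsto_re_inner hx hσC.ge hCx
  have hsq (r : ℝ) : (σ * r) ^ 2 = r ^ 2 := by rw [mul_pow, ← sq_abs σ, hσ, one_pow, one_mul]
  refine ⟨?_, ?_, ?_⟩
  · have := ((eB.mul eB).add (eC.mul eC)).norm_le_numRadius hx
    rwa [← sq, ← sq, ← sq, ← sq, ← RCLike.ofReal_pow, ← RCLike.ofReal_pow, ← RCLike.ofReal_add,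
      RCLike.norm_ofReal, hsq, hsq, abs_of_nonneg (by positivity)] at this
  · have := (eB.mul eC).norm_le_numRadius hx
    rwa [norm_mul, RCLike.norm_ofReal, RCLike.norm_ofReal, hσB, hσC] at this
  · have := ((eB.cfcAbs hB hx hσB).mul (eC.cfcAbs hC hx hσC)).norm_le_numRadius hx
    rwa [norm_mul, hσB, hσC, Complex.norm_real, Complex.norm_real, norm_norm, norm_norm] at this

theorem stmt_19 (B C : H →L[ℂ] H) (hB : IsSelfAdjoint B) (hC : IsSelfAdjoint C)
    (h : ‖B + C‖ = ‖B‖ + ‖C‖) :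
    ‖B ^ 2 + C ^ 2‖ = ‖B‖ ^ 2 + ‖C‖ ^ 2 ∧
      numRadius (opAbs B * opAbs C) = ‖B * C‖ ∧
      ‖B * C‖ = ‖B‖ * ‖C‖ ∧
      ‖B‖ * ‖C‖ = numRadius (B * C) := by
  obtain ⟨lower_sq, lower_mul, lower_abs⟩ := le_numRadius_of_norm_add_eq hB hC h
  simp only [← opAbs_eq_cfcAbs] at lower_abs
  have upper_sq : ‖B ^ 2 + C ^ 2‖ ≤ ‖B‖ ^ 2 + ‖C‖ ^ 2 :=
    (norm_add_le _ _).trans (add_le_add (norm_pow_le' B two_pos) (norm_pow_le' C two_pos))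
  have upper_abs : ‖opAbs B * opAbs C‖ ≤ ‖B‖ * ‖C‖ := by
    simpa only [opAbs_eq_cfcAbs, CFC.norm_abs] using norm_mul_le (CFC.abs B) (CFC.abs C)
  have upper_mul := norm_mul_le B C
  have w_sq := numRadius_le_opNorm (B ^ 2 + C ^ 2)
  have w_mul := numRadius_le_opNorm (B * C)
  have w_abs := numRadius_le_opNorm (opAbs B * opAbs C)
  refine ⟨by linarith, by linarith, by linarith, by linarith⟩
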